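/- Let Δ be a monotone NNF formula. Then the recursive function rob defined by rob(true) = ∞, rob(false) = 0, rob(literal) = 1, rob(α ∧ β) = min(rob(α), rob(β)), rob(α ∨ β) = rob(α) + rob(β), when Δ is additionally or-decomposable, satisfies: rob(Δ) ≥ k if and only if Δ has no implicate (clause entailed by Δ built from literals appearing in Δ) mentioning fewer than k variables; in particular, if Δ is or-decomposable and σ is a clause over the literals of Δ with Δ ⊨ σ and σ not valid, then σ mentions at least rob(Δ) variables. -/

import Mathlib

/-- NNF formulas over discrete variables `V` with state spaces `S v`. -/
inductive NNF (V : Type) (S : V → Type) : Type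
  | tru : NNF V S
  | fls : NNF V S
  | lit : (X : V) → Set (S X) → NNF V S
  | conj : NNF V S → NNF V S → NNF V S
  | disj : NNF V S → NNF V S → NNF V S

namespace NNF

variable {V : Type} {S : V → Type}

def sat : NNF V S → (∀ v, S v) → Prop
  | tru, _ => True
  | fls, _ => False
  | lit X s, w => w X ∈ s
  | conj a b, w => a.sat w ∧ b.sat w
  | disj a b, w => a.sat w ∨ b.sat w

def vars : NNF V S → Set V
  | tru => ∅
  | fls => ∅
  | lit X _ => {X}
  | conj a b => a.vars ∪ b.vars
  | disj a b => a.vars ∪ b.vars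

def lits : NNF V S → Set (Σ X : V, Set (S X))
  | tru => ∅
  | fls => ∅
  | lit X s => {⟨X, s⟩}
  | conj a b => a.lits ∪ b.lits
  | disj a b => a.lits ∪ b.lits

/-- Monotone: for each variable `X`, all `X`-literals appearing are simple
(single-state) and equal to each other. -/
def IsMonotone (Δ : NNF V S) : Prop :=
  ∀ (X : V) (s : Set (S X)), (⟨X, s⟩ : Σ X : V, Set (S X)) ∈ Δ.lits →
    (∃ a : S X, s = {a}) ∧ ∀ s' : Set (S X), (⟨X, s'⟩ : Σ X : V, Set (S X)) ∈ Δ.lits → s' = s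

/-- Or-decomposable: the disjuncts of every disjunction share no variables. -/
def IsDecomposable : NNF V S → Prop
  | tru => True
  | fls => True
  | lit _ _ => True
  | conj a b => a.IsDecomposable ∧ b.IsDecomposable
  | disj a b => a.IsDecomposable ∧ b.IsDecomposable ∧ a.vars ∩ b.vars = ∅

/-- `rob(true) = ∞`, `rob(false) = 0`, `rob(literal) = 1`,
`rob(α ∧ β) = min(rob α, rob β)`, `rob(α ∨ β) = rob α + rob β`. -/
noncomputable def rob : NNF V S → ℕ∞
  | tru => ⊤
  | fls => 0
  | lit _ _ => 1
  | conj a b => min a.rob b.rob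
  | disj a b => a.rob + b.rob

end NNF

/-- A clause over discrete variables, as an assignment of a (possibly empty) set of
states to each variable. -/
def Clause (V : Type) (S : V → Type) : Type := ∀ v, Set (S v)

def csat {V : Type} {S : V → Type} (c : Clause V S) (w : ∀ v, S v) : Prop := ∃ v, w v ∈ c v

def cvars {V : Type} {S : V → Type} (c : Clause V S) : Set V := {v | c v ≠ ∅}

def cvalid {V : Type} {S : V → Type} (c : Clause V S) : Prop := ∀ w : ∀ v, S v, csat c w

/-- An implicate of `Δ`: a non-valid clause entailed by `Δ`. -/
def Implicate {V : Type} {S : V → Type} (Δ : NNF V S) (c : Clause V S) : Prop :=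
  ¬ cvalid c ∧ ∀ w : ∀ v, S v, Δ.sat w → csat c w

/-!
Lower bound, by induction on the formula with the implicate generalized. A conjunction entails
a clause only if one of its conjuncts does: when each variable carries at most one literal, models
of the two conjuncts can be merged coordinatewise into a model of both, and the merged world still
falsifies every clause both models falsify. A disjunct of `α ∨ β` entails the part of the clause on
its own variables, since a non-valid clause can be falsified off those variables; by
or-decomposability the two parts mention disjoint sets of variables, so their sizes add up.

Upper bound: the matching construction, with the empty clause for `false`, a unit clause for a
literal, an implicate of the conjunct of smaller robustness, and the union of implicates of the
two disjuncts.
-/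

namespace NNF

variable {V : Type} {S : V → Type}

theorem mem_vars_iff {φ : NNF V S} {v : V} :
    v ∈ φ.vars ↔ ∃ s, (⟨v, s⟩ : Σ X : V, Set (S X)) ∈ φ.lits := by
  induction φ with
  | tru | fls => simp [vars, lits]
  | lit X s =>
    constructor
    · intro h
      rw [Set.mem_singleton_iff.1 h]
      exact ⟨s, rfl⟩
    · rintro ⟨_, h⟩
      cases h
      rfl
  | conj a b iha ihb | disj a b iha ihb =>
    simp only [vars, lits, Set.mem_union, iha, ihb, exists_or]

theorem vars_finite : ∀ φ : NNF V S, φ.vars.Finite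
  | tru => Set.finite_empty
  | fls => Set.finite_empty
  | lit _ _ => Set.finite_singleton _
  | conj a b => (vars_finite a).union (vars_finite b)
  | disj a b => (vars_finite a).union (vars_finite b)

theorem sat_congr {φ : NNF V S} {w w' : ∀ v, S v} (h : ∀ v ∈ φ.vars, w v = w' v) :
    φ.sat w ↔ φ.sat w' := by
  induction φ with
  | tru | fls => rfl
  | lit X s =>
    change w X ∈ s ↔ w' X ∈ s
    rw [h X rfl]
  | conj a b iha ihb =>
    exact and_congr (iha fun v hv => h v (.inl hv)) (ihb fun v hv => h v (.inr hv))
  | disj a b iha ihb =>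
    exact or_congr (iha fun v hv => h v (.inl hv)) (ihb fun v hv => h v (.inr hv))

theorem sat_mono {φ : NNF V S} {w w' : ∀ v, S v}
    (h : ∀ v s, (⟨v, s⟩ : Σ X : V, Set (S X)) ∈ φ.lits → w v ∈ s → w' v ∈ s) :
    φ.sat w → φ.sat w' := by
  induction φ with
  | tru | fls => exact id
  | lit X s => exact h X s rfl
  | conj a b iha ihb =>
    exact And.imp (iha fun v s hs => h v s (.inl hs)) (ihb fun v s hs => h v s (.inr hs))
  | disj a b iha ihb =>
    exact Or.imp (iha fun v s hs => h v s (.inl hs)) (ihb fun v s hs => h v s (.inr hs))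

def HasUniqueLits (φ : NNF V S) : Prop :=
  ∀ v s t, (⟨v, s⟩ : Σ X : V, Set (S X)) ∈ φ.lits → (⟨v, t⟩ : Σ X : V, Set (S X)) ∈ φ.lits →
    s = t

theorem IsMonotone.hasUniqueLits {φ : NNF V S} (h : φ.IsMonotone) : φ.HasUniqueLits :=
  fun v s t hs ht => (h v t ht).2 s hs

theorem HasUniqueLits.mono {φ ψ : NNF V S} (h : φ.HasUniqueLits) (hψ : ψ.lits ⊆ φ.lits) :
    ψ.HasUniqueLits :=
  fun v s t hs ht => h v s t (hψ hs) (hψ ht)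

theorem HasUniqueLits.exists_sat_conj {a b : NNF V S} (hu : (conj a b).HasUniqueLits)
    {w₁ w₂ : ∀ v, S v} (h₁ : a.sat w₁) (h₂ : b.sat w₂) :
    ∃ w : ∀ v, S v, (conj a b).sat w ∧ ∀ v, w v = w₁ v ∨ w v = w₂ v := by
  classical
  let w : ∀ v, S v := fun v =>
    if ∃ t, (⟨v, t⟩ : Σ X : V, Set (S X)) ∈ b.lits ∧ w₂ v ∈ t then w₂ v else w₁ v
  refine ⟨w, ⟨sat_mono (fun v s hs h₁s => ?_) h₁, sat_mono (fun v s hs h₂s => ?_) h₂⟩,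
    fun v => ?_⟩
  · by_cases hv : ∃ t, (⟨v, t⟩ : Σ X : V, Set (S X)) ∈ b.lits ∧ w₂ v ∈ t
    · obtain ⟨t, ht, h₂t⟩ := hv
      have hw : w v = w₂ v := if_pos ⟨t, ht, h₂t⟩
      rwa [hw, ← hu v t s (.inr ht) (.inl hs)]
    · simpa [w, hv] using h₁s
  · have hw : w v = w₂ v := if_pos ⟨s, hs, h₂s⟩
    rwa [hw]
  · by_cases hv : ∃ t, (⟨v, t⟩ : Σ X : V, Set (S X)) ∈ b.lits ∧ w₂ v ∈ t <;> simp [w, hv]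

end NNF

namespace Clause

variable {V : Type} {S : V → Type} {c d : Clause V S}

def IsOver (c : Clause V S) (L : Set (Σ X : V, Set (S X))) : Prop :=
  ∀ v, c v ≠ ∅ → (⟨v, c v⟩ : Σ X : V, Set (S X)) ∈ L

theorem IsOver.mono {L L' : Set (Σ X : V, Set (S X))} (h : c.IsOver L) (hL : L ⊆ L') :
    c.IsOver L' :=
  fun v hv => hL (h v hv)

theorem IsOver.cvars_subset {φ : NNF V S} (h : c.IsOver φ.lits) : cvars c ⊆ φ.vars :=
  fun v hv => NNF.mem_vars_iff.2 ⟨c v, h v hv⟩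

theorem IsOver.cvars_finite {φ : NNF V S} (h : c.IsOver φ.lits) : (cvars c).Finite :=
  φ.vars_finite.subset h.cvars_subset

def empty : Clause V S := fun _ => ∅

theorem cvars_empty : cvars (empty : Clause V S) = ∅ :=
  Set.eq_empty_of_forall_notMem fun _ hv => hv rfl

theorem isOver_empty (L : Set (Σ X : V, Set (S X))) : (empty : Clause V S).IsOver L :=
  fun _ hv => (hv rfl).elim

open Classical in
def unit (X : V) (s : Set (S X)) : Clause V S := Function.update (fun _ => ∅) X s

theorem unit_self (X : V) (s : Set (S X)) : unit X s X = s := by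
  simp [unit]

theorem unit_of_ne {X v : V} (s : Set (S X)) (hv : v ≠ X) : unit X s v = ∅ := by
  simp [unit, hv]

theorem cvars_unit_subset (X : V) (s : Set (S X)) : cvars (unit X s) ⊆ {X} :=
  fun _ hv => by_contra fun hvX => hv (unit_of_ne s hvX)

theorem isOver_unit (X : V) (s : Set (S X)) : (unit X s).IsOver (NNF.lit X s).lits := by
  intro _ hv
  rw [cvars_unit_subset X s hv, unit_self]
  rfl

def union (c d : Clause V S) : Clause V S := fun v => c v ∪ d v

theorem csat_union {w : ∀ v, S v} : csat (c.union d) w ↔ csat c w ∨ csat d w := by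
  simp only [csat, union, Set.mem_union, exists_or]

theorem cvars_union : cvars (c.union d) = cvars c ∪ cvars d := by
  ext v
  simp only [cvars, union, Set.mem_ofPred_eq, Set.mem_union, ne_eq, Set.union_empty_iff, not_and_or]

theorem IsOver.union {L L' : Set (Σ X : V, Set (S X))} (hc : c.IsOver L) (hd : d.IsOver L')
    (hcd : Disjoint (cvars c) (cvars d)) : (c.union d).IsOver (L ∪ L') := by
  intro v hv
  by_cases hcv : c v = ∅
  · have e : c.union d v = d v := by simp [Clause.union, hcv]
    rw [e] at hv ⊢
    exact .inr (hd v hv)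
  · have hdv : d v = ∅ := by_contra fun hdv => Set.disjoint_left.1 hcd hcv hdv
    have e : c.union d v = c v := by simp [Clause.union, hdv]
    rw [e] at hv ⊢
    exact .inl (hc v hv)

open Classical in
def restrict (c : Clause V S) (s : Set V) : Clause V S := fun v => if v ∈ s then c v else ∅

theorem cvars_restrict (s : Set V) : cvars (c.restrict s) = cvars c ∩ s := by
  ext v
  by_cases hv : v ∈ s <;> simp [cvars, restrict, hv]

theorem csat_of_csat_restrict {s : Set V} {w : ∀ v, S v} (h : csat (c.restrict s) w) :
    csat c w := by
  obtain ⟨v, hv⟩ := h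
  by_cases hvs : v ∈ s
  · exact ⟨v, by simpa [restrict, hvs] using hv⟩
  · simp [restrict, hvs] at hv

end Clause

namespace Implicate

variable {V : Type} {S : V → Type} {φ ψ : NNF V S} {c d : Clause V S}

theorem of_sat_imp (h : Implicate φ c) (hψ : ∀ w, ψ.sat w → φ.sat w) : Implicate ψ c :=
  ⟨h.1, fun w hw => h.2 w (hψ w hw)⟩

theorem cvars_nonempty (h : Implicate φ c) {w : ∀ v, S v} (hw : φ.sat w) :
    (cvars c).Nonempty :=
  let ⟨v, hv⟩ := h.2 w hw
  ⟨v, Set.nonempty_iff_ne_empty.1 ⟨_, hv⟩⟩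

theorem of_conj {a b : NNF V S} (hu : (NNF.conj a b).HasUniqueLits)
    (h : Implicate (.conj a b) c) : Implicate a c ∨ Implicate b c := by
  by_contra! hab
  have ha : ¬∀ w, a.sat w → csat c w := fun ha => hab.1 ⟨h.1, ha⟩
  have hb : ¬∀ w, b.sat w → csat c w := fun hb => hab.2 ⟨h.1, hb⟩
  push Not at ha hb
  obtain ⟨w₁, h₁, hc₁⟩ := ha
  obtain ⟨w₂, h₂, hc₂⟩ := hb
  obtain ⟨w, hw, hw₁₂⟩ := hu.exists_sat_conj h₁ h₂
  obtain ⟨v, hv⟩ := h.2 w hw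
  rcases hw₁₂ v with e | e
  · exact hc₁ ⟨v, e ▸ hv⟩
  · exact hc₂ ⟨v, e ▸ hv⟩

theorem restrict_vars (h : Implicate φ c) : Implicate φ (c.restrict φ.vars) := by
  classical
  have hc : ∀ v, ∃ x, x ∉ c v := fun v => by
    by_contra! hv
    exact h.1 fun w => ⟨v, hv (w v)⟩
  choose g hg using hc
  refine ⟨fun hv => h.1 fun w => Clause.csat_of_csat_restrict (hv w), fun w hw => ?_⟩
  let w' : ∀ v, S v := fun v => if v ∈ φ.vars then w v else g v
  have hw' : φ.sat w' := (NNF.sat_congr fun v hv => (if_pos hv).symm).1 hw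
  obtain ⟨v, hv⟩ := h.2 w' hw'
  by_cases hmem : v ∈ φ.vars
  · exact ⟨v, by simpa [w', Clause.restrict, hmem] using hv⟩
  · exact (hg v (by simpa [w', hmem] using hv)).elim

theorem disj {a b : NNF V S} (ha : Implicate a c) (hb : Implicate b d)
    (hcd : Disjoint (cvars c) (cvars d)) : Implicate (.disj a b) (c.union d) := by
  classical
  refine ⟨fun hv => ?_, fun w hw => Clause.csat_union.2 (Or.imp (ha.2 w) (hb.2 w) hw)⟩
  obtain ⟨w₁, hw₁⟩ := not_forall.1 ha.1
  obtain ⟨w₂, hw₂⟩ := not_forall.1 hb.1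
  rcases Clause.csat_union.1 (hv fun v => if v ∈ cvars d then w₂ v else w₁ v) with
    ⟨v, hv⟩ | ⟨v, hv⟩ <;> by_cases hdv : v ∈ cvars d
  · exact Set.disjoint_left.1 hcd (Set.nonempty_iff_ne_empty.1 ⟨_, hv⟩) hdv
  · simp only [hdv, if_false] at hv
    exact hw₁ ⟨v, hv⟩
  · simp only [hdv, if_true] at hv
    exact hw₂ ⟨v, hv⟩
  · exact hdv (Set.nonempty_iff_ne_empty.1 ⟨_, hv⟩)

variable [∀ v, Nonempty (S v)]

theorem fls_empty : Implicate (.fls : NNF V S) Clause.empty :=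
  ⟨fun h => let ⟨_, hv⟩ := h fun _ => Classical.arbitrary _; Set.notMem_empty _ hv,
    fun _ h => h.elim⟩

theorem lit_unit {X : V} {s : Set (S X)} (hs : s ≠ Set.univ) :
    Implicate (.lit X s) (Clause.unit X s) := by
  classical
  obtain ⟨x, hx⟩ := (Set.ne_univ_iff_exists_notMem s).1 hs
  refine ⟨fun h => ?_, fun w hw => ⟨X, by rwa [Clause.unit_self]⟩⟩
  obtain ⟨v, hv⟩ := h (Function.update (fun _ => Classical.arbitrary _) X x)
  by_cases hvX : v = X
  · subst hvX
    simp [Clause.unit_self, hx] at hv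
  · simp [Clause.unit_of_ne s hvX] at hv

end Implicate

namespace NNF

variable {V : Type} {S : V → Type} [∀ v, Nonempty (S v)]

theorem rob_le_encard_cvars_of_implicate :
    ∀ {φ : NNF V S}, φ.HasUniqueLits → (∀ p ∈ φ.lits, p.2.Nonempty) → φ.IsDecomposable →
      ∀ {c : Clause V S}, Implicate φ c → φ.rob ≤ (cvars c).encard
  | tru, _, _, _, _, h => (h.1 fun w => h.2 w trivial).elim
  | fls, _, _, _, _, _ => zero_le
  | lit X s, _, hne, _, _, h => by
    classical
    obtain ⟨x, hx⟩ := hne _ rfl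
    have hw : (lit X s).sat (Function.update (fun _ => Classical.arbitrary _) X x) := by
      simpa [sat] using hx
    exact Set.one_le_encard_iff_nonempty.2 (h.cvars_nonempty hw)
  | conj a b, hu, hne, hd, _, h => by
    rcases h.of_conj hu with h | h
    · exact (min_le_left _ _).trans <| rob_le_encard_cvars_of_implicate
        (hu.mono Set.subset_union_left) (fun p hp => hne p (.inl hp)) hd.1 h
    · exact (min_le_right _ _).trans <| rob_le_encard_cvars_of_implicate
        (hu.mono Set.subset_union_right) (fun p hp => hne p (.inr hp)) hd.2 h
  | disj a b, hu, hne, hd, c, h => by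
    have hab : Disjoint (cvars c ∩ a.vars) (cvars c ∩ b.vars) :=
      (Set.disjoint_iff_inter_eq_empty.2 hd.2.2).mono Set.inter_subset_right
        Set.inter_subset_right
    have ha := rob_le_encard_cvars_of_implicate (hu.mono Set.subset_union_left)
      (fun p hp => hne p (.inl hp)) hd.1 (h.of_sat_imp fun _ => .inl).restrict_vars
    have hb := rob_le_encard_cvars_of_implicate (hu.mono Set.subset_union_right)
      (fun p hp => hne p (.inr hp)) hd.2.1 (h.of_sat_imp fun _ => .inr).restrict_vars
    rw [Clause.cvars_restrict] at ha hb
    calc (disj a b).rob = a.rob + b.rob := rfl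
      _ ≤ (cvars c ∩ a.vars).encard + (cvars c ∩ b.vars).encard := add_le_add ha hb
      _ = (cvars c ∩ a.vars ∪ cvars c ∩ b.vars).encard := (Set.encard_union_eq hab).symm
      _ ≤ (cvars c).encard :=
        Set.encard_le_encard (Set.union_subset Set.inter_subset_left Set.inter_subset_left)

theorem exists_implicate_encard_cvars_le_rob :
    ∀ {φ : NNF V S}, (∀ p ∈ φ.lits, p.2 ≠ Set.univ) → φ.IsDecomposable → φ.rob ≠ ⊤ →
      ∃ c : Clause V S, c.IsOver φ.lits ∧ Implicate φ c ∧ (cvars c).encard ≤ φ.rob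
  | tru, _, _, h => (h rfl).elim
  | fls, _, _, _ =>
    ⟨Clause.empty, Clause.isOver_empty _, Implicate.fls_empty, by simp [Clause.cvars_empty]⟩
  | lit X s, hs, _, _ =>
    ⟨Clause.unit X s, Clause.isOver_unit X s, Implicate.lit_unit (hs _ rfl),
      (Set.encard_le_encard (Clause.cvars_unit_subset X s)).trans_eq (Set.encard_singleton X)⟩
  | conj a b, hs, hd, ht => by
    rcases le_total a.rob b.rob with hab | hab
    · have hrob : (conj a b).rob = a.rob := min_eq_left hab
      obtain ⟨c, hc, h, hle⟩ := exists_implicate_encard_cvars_le_rob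
        (fun p hp => hs p (.inl hp)) hd.1 (hrob ▸ ht)
      exact ⟨c, hc.mono Set.subset_union_left, h.of_sat_imp fun _ => And.left, hrob ▸ hle⟩
    · have hrob : (conj a b).rob = b.rob := min_eq_right hab
      obtain ⟨c, hc, h, hle⟩ := exists_implicate_encard_cvars_le_rob
        (fun p hp => hs p (.inr hp)) hd.2 (hrob ▸ ht)
      exact ⟨c, hc.mono Set.subset_union_right, h.of_sat_imp fun _ => And.right, hrob ▸ hle⟩
  | disj a b, hs, hd, ht => by
    obtain ⟨hta, htb⟩ := WithTop.add_ne_top.1 ht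
    obtain ⟨c, hc, hac, hca⟩ :=
      exists_implicate_encard_cvars_le_rob (fun p hp => hs p (.inl hp)) hd.1 hta
    obtain ⟨d, hd', hbd, hdb⟩ :=
      exists_implicate_encard_cvars_le_rob (fun p hp => hs p (.inr hp)) hd.2.1 htb
    have hcd : Disjoint (cvars c) (cvars d) :=
      (Set.disjoint_iff_inter_eq_empty.2 hd.2.2).mono hc.cvars_subset hd'.cvars_subset
    refine ⟨c.union d, hc.union hd' hcd, hac.disj hbd hcd, ?_⟩
    rw [Clause.cvars_union, Set.encard_union_eq hcd]
    exact add_le_add hca hdb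

end NNF

/-- For a monotone NNF `Δ` that is additionally or-decomposable: `rob Δ ≥ k` iff `Δ` has
no implicate built from literals appearing in `Δ` mentioning fewer than `k` variables;
in particular, any non-valid clause over the literals of `Δ` entailed by `Δ` mentions at
least `rob Δ` variables. -/
theorem stmt17 {V : Type} {S : V → Type} [∀ v, Nonempty (S v)]
    (Δ : NNF V S)
    (hwf : ∀ p : Σ X : V, Set (S X), p ∈ Δ.lits → p.2 ≠ ∅ ∧ p.2 ≠ Set.univ)
    (hmono : Δ.IsMonotone) (hdec : Δ.IsDecomposable) :
    (∀ k : ℕ, (k : ℕ∞) ≤ Δ.rob ↔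
      ¬ ∃ c : Clause V S,
        (∀ v : V, c v ≠ ∅ → (⟨v, c v⟩ : Σ X : V, Set (S X)) ∈ Δ.lits) ∧
        Implicate Δ c ∧ (cvars c).ncard < k) ∧
    (∀ c : Clause V S,
      (∀ v : V, c v ≠ ∅ → (⟨v, c v⟩ : Σ X : V, Set (S X)) ∈ Δ.lits) →
      (∀ w : ∀ v, S v, Δ.sat w → csat c w) → ¬ cvalid c →
      Δ.rob ≤ ((cvars c).ncard : ℕ∞)) := by
  have lower (c : Clause V S) (hc : c.IsOver Δ.lits) (h : Implicate Δ c) :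
      Δ.rob ≤ (cvars c).ncard := by
    rw [hc.cvars_finite.cast_ncard_eq]
    exact NNF.rob_le_encard_cvars_of_implicate hmono.hasUniqueLits
      (fun p hp => Set.nonempty_iff_ne_empty.2 (hwf p hp).1) hdec h
  refine ⟨fun k => ⟨?_, fun hk => ?_⟩, fun c hc hent hnv => lower c hc ⟨hnv, hent⟩⟩
  · rintro hk ⟨c, hc, h, hlt⟩
    exact (hk.trans (lower c hc h)).not_gt (by exact_mod_cast hlt)
  · by_contra! hlt
    obtain ⟨c, hc, h, hle⟩ := NNF.exists_implicate_encard_cvars_le_rob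
      (fun p hp => (hwf p hp).2) hdec hlt.ne_top
    rw [← hc.cvars_finite.cast_ncard_eq] at hle
    exact hk ⟨c, hc, h, by exact_mod_cast hle.trans_lt hlt⟩
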